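/- Let q, s, m be positive and v > 0, and assume C₂·q³·m·v⁴ ≥ s² for some constant C₂ ≥ 1. Then (qv²e/s)·sup{ (T/log²(mv²T/s))·(s/(qv²))^{1/T} : T ≤ q, T ≥ se/(mv²), T ≥ 3, T ≥ log(mv²T/s) } ≤ C₂^{1/3}·q²·v²·e⁵/(s·log²(mv²q/s)), where the supremum is over integers T satisfying the stated constraints. -/

import Mathlib

open MeasureTheory ProbabilityTheory Real Finset
open scoped BigOperators ENNReal NNReal Classical

noncomputable section

/-- Euclidean (`ℓ₂`) norm of a finite real vector. -/
def l2 {k : ℕ} (x : Fin k → ℝ) : ℝ := Real.sqrt (∑ i, x i ^ 2)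

/-- Sup (`ℓ_∞`) norm of a finite real vector. -/
def linf {k : ℕ} (x : Fin k → ℝ) : ℝ := ⨆ i, |x i|

/-- The moment norm `‖X‖_q = (E |X|^q)^{1/q}`. -/
def mom {Ω : Type*} [MeasurableSpace Ω] (μ : Measure Ω) (q : ℝ) (X : Ω → ℝ) : ℝ :=
  (∫ ω, |X ω| ^ q ∂μ) ^ (1 / q)

/-- A sparse JL distribution, presented by the random families `σ` (Rademachers) and
`η` (Bernoulli selectors) on a probability space. -/
structure SparseJL {Ω : Type*} [MeasurableSpace Ω] (μ : Measure Ω) (n m s : ℕ) where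
  σ : Fin m → Fin n → Ω → ℝ
  η : Fin m → Fin n → Ω → ℝ
  σ_meas : ∀ r i, Measurable (σ r i)
  η_meas : ∀ r i, Measurable (η r i)
  σ_rademacher : ∀ r i, μ {ω | σ r i ω = 1} = 1/2 ∧ μ {ω | σ r i ω = -1} = 1/2
  σ_indep : iIndepFun (m := fun _ : Fin m × Fin n => (inferInstance : MeasurableSpace ℝ))
      (fun p ω => σ p.1 p.2 ω) μ
  η_bool : ∀ r i ω, η r i ω = 0 ∨ η r i ω = 1
  η_mean : ∀ r i, ∫ ω, η r i ω ∂μ = (s : ℝ) / (m : ℝ)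
  σ_η_indep : IndepFun (fun ω (p : Fin m × Fin n) => σ p.1 p.2 ω)
      (fun ω (p : Fin m × Fin n) => η p.1 p.2 ω) μ
  η_cols_indep : iIndepFun (m := fun _ : Fin n => (inferInstance : MeasurableSpace (Fin m → ℝ)))
      (fun i ω r => η r i ω) μ
  η_col_sum : ∀ i ω, ∑ r, η r i ω = (s : ℝ)
  η_neg_corr : ∀ i (S : Finset (Fin m)),
      ∫ ω, ∏ r ∈ S, η r i ω ∂μ ≤ ((s : ℝ) / (m : ℝ)) ^ S.card

/-- A uniform sparse JL distribution: each column's support is a uniformly random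
`s`-subset of the rows. -/
structure UniformSparseJL {Ω : Type*} [MeasurableSpace Ω] (μ : Measure Ω) (n m s : ℕ)
    extends SparseJL μ n m s where
  uniform : ∀ (i : Fin n) (S : Finset (Fin m)), S.card = s →
      μ {ω | ∀ r, η r i ω = if r ∈ S then 1 else 0} = ((Nat.choose m s : ℝ≥0∞))⁻¹

namespace SparseJL

variable {Ω : Type*} [MeasurableSpace Ω] {μ : Measure Ω} {n m s : ℕ}

/-- The random matrix entry `A_{r,i} = η_{r,i} σ_{r,i} / √s`. -/
def A (J : SparseJL μ n m s) (ω : Ω) (r : Fin m) (i : Fin n) : ℝ :=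
  J.η r i ω * J.σ r i ω / Real.sqrt s

/-- The row error term `Z_r(x) = Σ_{i ≠ j} η_{r,i} η_{r,j} σ_{r,i} σ_{r,j} x_i x_j`. -/
def Z (J : SparseJL μ n m s) (r : Fin m) (x : Fin n → ℝ) (ω : Ω) : ℝ :=
  ∑ i, ∑ j, if i ≠ j then
    J.η r i ω * J.η r j ω * J.σ r i ω * J.σ r j ω * x i * x j else 0

/-- The error term `R(x) = (1/s) Σ_r Z_r(x)`. -/
def R (J : SparseJL μ n m s) (x : Fin n → ℝ) (ω : Ω) : ℝ :=
  (1 / (s : ℝ)) * ∑ r, J.Z r x ω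

/-- `v(m, ε, δ, s)`: the sup of all `v ∈ [0,1]` such that the JL norm-preservation
condition holds with distortion `ε` and failure probability `δ` on
`S_v = {x : ‖x‖_∞ ≤ v ‖x‖₂}`. -/
def vstat (J : SparseJL μ n m s) (ε δ : ℝ) : ℝ :=
  sSup {v : ℝ | v ∈ Set.Icc (0:ℝ) 1 ∧ ∀ x : Fin n → ℝ, linf x ≤ v * l2 x →
    ENNReal.ofReal (1 - δ) <
      μ {ω | (1 - ε) * l2 x ≤ l2 (fun r => ∑ i, J.A ω r i * x i) ∧
             l2 (fun r => ∑ i, J.A ω r i * x i) ≤ (1 + ε) * l2 x}}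

end SparseJL

/-- The vector `(v, …, v, 0, …, 0)` with `N` nonzero coordinates. -/
def vVec (n N : ℕ) (v : ℝ) : Fin n → ℝ := fun i => if (i : ℕ) < N then v else 0

/-- Decreasing rearrangement of a finite tuple of reals. -/
def decSort {k : ℕ} (w : Fin k → ℝ) : Fin k → ℝ := w ∘ (Tuple.sort (fun i => -w i))

/-! The base `s/(qv²)` is at most `C₂ Q² T/e` with `Q = mv²q/s`, because `s² ≤ C₂q³mv⁴` and
`mv²T/s ≥ e`. Taking `T`-th roots and writing `L = log (mv²T/s)`, `q = T eᵗ`, so that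
`log Q = L + t ≤ L (1 + t)`, every term of the supremum is bounded once
`(2(L + t) + log T - 1)/T + 2 log (1 + t) ≤ t + 4`. That holds for `L ≤ T`, `t ≥ 0` and every
integer `T ≥ 3`, by tangent-line bounds on the logarithm; `T = 3` is the tight case. -/

lemma log_le_div_add_log_sub_one {x c : ℝ} (hx : 0 < x) (hc : 0 < c) :
    log x ≤ x / c + log c - 1 := by
  have := log_le_sub_one_of_pos (div_pos hx hc)
  rw [log_div hx.ne' hc.ne'] at this
  linarith

lemma log_three_add_six_mul_log_six_lt : log 3 + 6 * log 6 < 12 := by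
  have h : (3 * 6 ^ 6 : ℝ) < exp 12 := by
    calc (3 * 6 ^ 6 : ℝ) < 2.7 ^ 12 := by norm_num
      _ < exp 1 ^ 12 := by
        gcongr
        linarith [exp_one_gt_d9]
      _ = exp 12 := by rw [← exp_nat_mul]; norm_num
  have := log_lt_log (by norm_num) h
  rwa [log_exp, log_mul (by norm_num) (by norm_num), log_pow] at this

lemma div_add_two_mul_log_one_add_le {T : ℕ} {L t : ℝ} (hT : 3 ≤ T) (hLT : L ≤ T)
    (ht : 0 ≤ t) : (2 * (L + t) + log T - 1) / T + 2 * log (1 + t) ≤ t + 4 := by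
  rcases hT.eq_or_lt with rfl | hT4
  · have h6 := log_le_div_add_log_sub_one (c := 6) (by linarith : (0 : ℝ) < 1 + t) (by norm_num)
    have := log_three_add_six_mul_log_six_lt
    push_cast at hLT ⊢
    linarith
  · have hT4 : (4 : ℝ) ≤ T := by exact_mod_cast hT4
    have hlog4 : log 4 = 2 * log 2 := by
      rw [show (4 : ℝ) = 2 ^ 2 by norm_num, log_pow, Nat.cast_ofNat]
    have h2 := log_two_lt_d9
    have hlogT := log_le_div_add_log_sub_one (c := 4) (by linarith : (0 : ℝ) < T) (by norm_num)
    have hlog1t := log_le_div_add_log_sub_one (c := 4) (by linarith : (0 : ℝ) < 1 + t)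
      (by norm_num)
    have hdiv : (2 * (L + t) + log T - 1) / T ≤ 2 + t / 2 + 1 / 4 := by
      rw [div_le_iff₀ (by linarith)]
      nlinarith
    linarith

lemma mul_exp_mul_sq_le {T : ℕ} {L t : ℝ} (hT : 3 ≤ T) (hL : 1 ≤ L) (hLT : L ≤ T)
    (ht : 0 ≤ t) :
    T * exp ((2 * (L + t) + log T - 1) / T) * (L + t) ^ 2 ≤ T * exp t * exp 1 ^ 4 * L ^ 2 := by
  have hsq : (L + t) ^ 2 ≤ L ^ 2 * (1 + t) ^ 2 := by
    rw [← mul_pow]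
    gcongr
    nlinarith
  have hexp : exp ((2 * (L + t) + log T - 1) / T) * (1 + t) ^ 2 ≤ exp t * exp 1 ^ 4 := by
    have h1t : (1 + t) ^ 2 = exp (2 * log (1 + t)) := by
      rw [← exp_log (by linarith : (0 : ℝ) < 1 + t), ← exp_nat_mul, log_exp]
      norm_num
    rw [h1t, ← exp_add, ← exp_nat_mul, ← exp_add]
    exact exp_le_exp.2 (by push_cast; linarith [div_add_two_mul_log_one_add_le hT hLT ht])
  calc T * exp ((2 * (L + t) + log T - 1) / T) * (L + t) ^ 2
      ≤ T * exp ((2 * (L + t) + log T - 1) / T) * (L ^ 2 * (1 + t) ^ 2) := by gcongr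
    _ = T * L ^ 2 * (exp ((2 * (L + t) + log T - 1) / T) * (1 + t) ^ 2) := by ring
    _ ≤ T * L ^ 2 * (exp t * exp 1 ^ 4) := by gcongr
    _ = T * exp t * exp 1 ^ 4 * L ^ 2 := by ring

lemma rpow_one_div_le_mul_exp {x C Q : ℝ} {T : ℕ} (hx : 0 ≤ x) (hC : 1 ≤ C) (hT : 3 ≤ T)
    (hQ : 0 < Q) (hxQ : x ≤ C * (Q ^ 2 * T / exp 1)) :
    x ^ (1 / (T : ℝ)) ≤ C ^ (1 / 3 : ℝ) * exp ((2 * log Q + log T - 1) / T) := by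
  have hT0 : (0 : ℝ) < T := by positivity
  have hCT : C ^ (1 / (T : ℝ)) ≤ C ^ (1 / 3 : ℝ) := by
    gcongr
    exact_mod_cast hT
  calc x ^ (1 / (T : ℝ)) ≤ (C * (Q ^ 2 * T / exp 1)) ^ (1 / (T : ℝ)) := by gcongr
    _ = C ^ (1 / (T : ℝ)) * exp ((2 * log Q + log T - 1) / T) := by
      rw [mul_rpow (by linarith) (by positivity), rpow_def_of_pos (x := Q ^ 2 * T / exp 1)
        (by positivity), log_div (by positivity) (exp_ne_zero 1),
        log_mul (by positivity) hT0.ne', log_pow, log_exp]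
      push_cast
      ring_nf
    _ ≤ C ^ (1 / 3 : ℝ) * exp ((2 * log Q + log T - 1) / T) := by gcongr

lemma div_log_sq_mul_rpow_le_of_le_mul {x C P Q q : ℝ} {T : ℕ} (hx : 0 ≤ x) (hC : 1 ≤ C)
    (hT : 3 ≤ T) (hTq : (T : ℝ) ≤ q) (hPe : exp 1 ≤ P) (hLT : log P ≤ T)
    (hQT : Q * T = P * q) (hxC : x ≤ C * q * Q) :
    T / log P ^ 2 * x ^ (1 / (T : ℝ)) ≤ C ^ (1 / 3 : ℝ) * q * exp 1 ^ 4 / log Q ^ 2 := by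
  have hT0 : (0 : ℝ) < T := by positivity
  have hP : 0 < P := (exp_pos 1).trans_le hPe
  have hq : 0 < q := hT0.trans_le hTq
  have hQ : Q = P * (q / T) := by field_simp; linarith
  set t := log (q / T) with ht
  have hL : 1 ≤ log P := by simpa using log_le_log (exp_pos 1) hPe
  have ht0 : 0 ≤ t := log_nonneg ((one_le_div hT0).2 hTq)
  have hqt : T * exp t = q := by
    rw [ht, exp_log (by positivity)]
    field_simp
  have hlogQ : log Q = log P + t := by rw [hQ, log_mul hP.ne' (by positivity)]
  have hxQ : x ≤ C * (Q ^ 2 * T / exp 1) := by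
    have hqQ : exp 1 * q ≤ Q * T := by rw [hQT]; gcongr
    have hQ0 : 0 < Q := by rw [hQ]; positivity
    rw [mul_div_assoc', le_div_iff₀ (exp_pos 1)]
    calc x * exp 1 ≤ C * q * Q * exp 1 := by gcongr
      _ = C * Q * (exp 1 * q) := by ring
      _ ≤ C * Q * (Q * T) := by gcongr
      _ = C * (Q ^ 2 * T) := by ring
  have hroot := rpow_one_div_le_mul_exp hx hC hT (by rw [hQ]; positivity) hxQ
  rw [div_mul_eq_mul_div, div_le_div_iff₀ (by positivity) (by rw [hlogQ]; positivity)]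
  calc T * x ^ (1 / (T : ℝ)) * log Q ^ 2
      ≤ T * (C ^ (1 / 3 : ℝ) * exp ((2 * log Q + log T - 1) / T)) * log Q ^ 2 := by gcongr
    _ = C ^ (1 / 3 : ℝ) * (T * exp ((2 * (log P + t) + log T - 1) / T) * (log P + t) ^ 2) := by
      rw [hlogQ]; ring
    _ ≤ C ^ (1 / 3 : ℝ) * (T * exp t * exp 1 ^ 4 * log P ^ 2) := by
      gcongr C ^ (1 / 3 : ℝ) * ?_
      exact mul_exp_mul_sq_le hT hL hLT ht0
    _ = C ^ (1 / 3 : ℝ) * q * exp 1 ^ 4 * log P ^ 2 := by rw [← hqt]; ring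

lemma div_log_sq_mul_rpow_le {q s m v C₂ : ℝ} (hs : 0 < s) (hm : 0 < m) (hv : 0 < v)
    (hC₂ : 1 ≤ C₂) (h : C₂ * q ^ 3 * m * v ^ 4 ≥ s ^ 2) {T : ℕ} (hTq : (T : ℝ) ≤ q)
    (hTe : s * exp 1 / (m * v ^ 2) ≤ T) (hT : 3 ≤ T) (hLT : log (m * v ^ 2 * T / s) ≤ T) :
    T / log (m * v ^ 2 * T / s) ^ 2 * (s / (q * v ^ 2)) ^ (1 / (T : ℝ)) ≤
      C₂ ^ (1 / 3 : ℝ) * q * exp 1 ^ 4 / log (m * v ^ 2 * q / s) ^ 2 := by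
  have hq : 0 < q := lt_of_lt_of_le (by positivity) hTq
  refine div_log_sq_mul_rpow_le_of_le_mul (by positivity) hC₂ hT hTq ?_ hLT (by ring) ?_
  · rw [div_le_iff₀ (by positivity)] at hTe
    rw [le_div_iff₀ hs]
    linarith
  · rw [div_le_iff₀ (by positivity)]
    field_simp
    nlinarith

/-- Lemma 30 of the paper, a purely analytic bound on a supremum. -/
theorem statement19 (q s m v C₂ : ℝ) (hq : 0 < q) (hs : 0 < s) (hm : 0 < m)
    (hv : 0 < v) (hC₂ : 1 ≤ C₂) (h : C₂ * q ^ 3 * m * v ^ 4 ≥ s ^ 2) :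
    q * v ^ 2 * Real.exp 1 / s *
        sSup {z : ℝ | ∃ T : ℕ, (T : ℝ) ≤ q ∧ s * Real.exp 1 / (m * v ^ 2) ≤ (T : ℝ) ∧
          3 ≤ T ∧ Real.log (m * v ^ 2 * T / s) ≤ (T : ℝ) ∧
          z = (T : ℝ) / Real.log (m * v ^ 2 * T / s) ^ 2 *
            (s / (q * v ^ 2)) ^ ((1 : ℝ) / T)} ≤
      C₂ ^ ((1 : ℝ) / 3) * q ^ 2 * v ^ 2 * Real.exp 1 ^ 5 /
        (s * Real.log (m * v ^ 2 * q / s) ^ 2) := by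
  calc _ ≤ q * v ^ 2 * exp 1 / s *
        (C₂ ^ (1 / 3 : ℝ) * q * exp 1 ^ 4 / log (m * v ^ 2 * q / s) ^ 2) := by
        gcongr
        refine Real.sSup_le ?_ (by positivity)
        rintro z ⟨T, hTq, hTe, hT, hLT, rfl⟩
        exact div_log_sq_mul_rpow_le hs hm hv hC₂ h hTq hTe hT hLT
    _ = C₂ ^ ((1 : ℝ) / 3) * q ^ 2 * v ^ 2 * exp 1 ^ 5 / (s * log (m * v ^ 2 * q / s) ^ 2) := by
      ring
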